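/- There do not exist a measurable space Λ with a probability measure μ, a type X, functions A, B : S² → Λ → X (S² the unit sphere in ℝ³), and a family P : S² → X → ℝ with: (i) for every unit vector n and every x : X, P n x ∈ {-1, 1}; (ii) for every unit vector n, the maps λ ↦ P n (A n λ) and λ ↦ P n (B n λ) are measurable; and (iii) for all unit vectors a, b in ℝ³, ∫ P a (A a λ) · P b (B b λ) dμ(λ) = −⟪a,b⟫, where ⟪·,·⟫ is the Euclidean inner product on ℝ³. -/

import Mathlib

open MeasureTheory
open scoped RealInnerProductSpace

/-!
Any local deterministic model produces, for each hidden state, four numbers in `[-1, 1]`, and for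
such numbers the CHSH combination `x y + x y' + x' y - x' y'` is at most `2`; integrating, the
model's correlations obey the CHSH inequality. The singlet correlation `-⟪a, b⟫`, evaluated at two
orthogonal directions `a, a'` and the two diagonals `b, b'` of their plane, gives `2√2` instead.
-/

theorem chsh_le_two {x x' y y' : ℝ} (hx : |x| ≤ 1) (hx' : |x'| ≤ 1) (hy : |y| ≤ 1)
    (hy' : |y'| ≤ 1) : x * y + x * y' + x' * y - x' * y' ≤ 2 := by
  have bound : ∀ {s : ℝ}, |s| ≤ 1 → ∀ t, s * t ≤ |t| := fun hs t =>
    (le_abs_self _).trans (by rw [abs_mul]; exact mul_le_of_le_one_left (abs_nonneg t) hs)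
  have hsum := bound hx (y + y')
  have hdiff := bound hx' (y - y')
  have hy1 := abs_le.mp hy
  have hy'1 := abs_le.mp hy'
  cases abs_cases (y + y') <;> cases abs_cases (y - y') <;> linarith

section CHSH

variable {Ω : Type*} [MeasurableSpace Ω] {μ : Measure Ω} [IsProbabilityMeasure μ]
  {f f' g g' : Ω → ℝ}

theorem integrable_mul_of_abs_le_one (hf : AEStronglyMeasurable f μ)
    (hg : AEStronglyMeasurable g μ) (hf1 : ∀ ω, |f ω| ≤ 1) (hg1 : ∀ ω, |g ω| ≤ 1) :
    Integrable (fun ω => f ω * g ω) μ :=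
  Integrable.of_bound (hf.mul hg) 1 <| ae_of_all _ fun ω => by
    simpa [abs_mul] using mul_le_one₀ (hf1 ω) (abs_nonneg _) (hg1 ω)

theorem integral_chsh_le_two (hf : AEStronglyMeasurable f μ) (hf' : AEStronglyMeasurable f' μ)
    (hg : AEStronglyMeasurable g μ) (hg' : AEStronglyMeasurable g' μ)
    (hf1 : ∀ ω, |f ω| ≤ 1) (hf'1 : ∀ ω, |f' ω| ≤ 1) (hg1 : ∀ ω, |g ω| ≤ 1)
    (hg'1 : ∀ ω, |g' ω| ≤ 1) :
    (∫ ω, f ω * g ω ∂μ) + (∫ ω, f ω * g' ω ∂μ) + (∫ ω, f' ω * g ω ∂μ)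
      - (∫ ω, f' ω * g' ω ∂μ) ≤ 2 := by
  have i₁ := integrable_mul_of_abs_le_one hf hg hf1 hg1
  have i₂ := integrable_mul_of_abs_le_one hf hg' hf1 hg'1
  have i₃ := integrable_mul_of_abs_le_one hf' hg hf'1 hg1
  have i₄ := integrable_mul_of_abs_le_one hf' hg' hf'1 hg'1
  have hlinear : (∫ ω, f ω * g ω + f ω * g' ω + f' ω * g ω - f' ω * g' ω ∂μ) =
      (∫ ω, f ω * g ω ∂μ) + (∫ ω, f ω * g' ω ∂μ) + (∫ ω, f' ω * g ω ∂μ)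
        - (∫ ω, f' ω * g' ω ∂μ) := by
    rw [integral_sub (by fun_prop) i₄, integral_add (by fun_prop) i₃, integral_add i₁ i₂]
  rw [← hlinear]
  calc _ ≤ ∫ _, (2 : ℝ) ∂μ :=
        integral_mono (((i₁.add i₂).add i₃).sub i₄) (integrable_const 2) fun ω =>
          chsh_le_two (hf1 ω) (hf'1 ω) (hg1 ω) (hg'1 ω)
    _ = 2 := by simp

end CHSH

theorem exists_singlet_chsh_eq_two_mul_sqrt_two {E : Type*} [NormedAddCommGroup E]
    [InnerProductSpace ℝ E] {u v : E} (hu : ‖u‖ = 1) (hv : ‖v‖ = 1) (huv : ⟪u, v⟫ = 0) :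
    ∃ a a' b b' : E, ‖a‖ = 1 ∧ ‖a'‖ = 1 ∧ ‖b‖ = 1 ∧ ‖b'‖ = 1 ∧
      -⟪a, b⟫ - ⟪a, b'⟫ - ⟪a', b⟫ + ⟪a', b'⟫ = 2 * √2 := by
  set c : ℝ := (√2)⁻¹
  have hc : c * √2 = 1 := inv_mul_cancel₀ (by positivity)
  have hadd : ‖u + v‖ = √2 := by
    rw [← Real.sqrt_sq (norm_nonneg _), norm_add_sq_real, hu, hv, huv]; norm_num
  have hsub : ‖v - u‖ = √2 := by
    rw [← Real.sqrt_sq (norm_nonneg _), norm_sub_sq_real, hu, hv, real_inner_comm, huv]; norm_num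
  refine ⟨u, v, -(c • (u + v)), c • (v - u), hu, hv, ?_, ?_, ?_⟩
  · rw [norm_neg, norm_smul, hadd, Real.norm_of_nonneg (by positivity), hc]
  · rw [norm_smul, hsub, Real.norm_of_nonneg (by positivity), hc]
  · simp only [inner_neg_right, inner_smul_right, inner_add_right, inner_sub_right,
      real_inner_self_eq_norm_sq, hu, hv, huv, real_inner_comm u v]
    linear_combination (2 * √2) * hc - 2 * c * Real.sq_sqrt zero_le_two

/-- Corollary 2: there is no local, deterministic generalized hidden variable
model `(Λ, X, A, B, μ, P)` of the EPR-Bohm experiment reproducing the quantum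
mechanical product expectation values after projection to `{-1, 1}`. -/
theorem no_generalized_hidden_variable_model :
    ¬ ∃ (Λ : Type) (_ : MeasurableSpace Λ) (μ : Measure Λ)
        (_ : IsProbabilityMeasure μ) (X : Type)
        (A B : EuclideanSpace ℝ (Fin 3) → Λ → X)
        (P : EuclideanSpace ℝ (Fin 3) → X → ℝ),
      (∀ n : EuclideanSpace ℝ (Fin 3), ‖n‖ = 1 → ∀ x : X, P n x ∈ ({-1, 1} : Set ℝ)) ∧
      (∀ n : EuclideanSpace ℝ (Fin 3), ‖n‖ = 1 →
        Measurable (fun l => P n (A n l)) ∧ Measurable (fun l => P n (B n l))) ∧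
      (∀ a b : EuclideanSpace ℝ (Fin 3), ‖a‖ = 1 → ‖b‖ = 1 →
        (∫ l, P a (A a l) * P b (B b l) ∂μ) = -⟪a, b⟫) := by
  rintro ⟨Λ, _, μ, _, X, A, B, P, hP, hMeas, hE⟩
  have hP1 : ∀ n : EuclideanSpace ℝ (Fin 3), ‖n‖ = 1 → ∀ x, |P n x| ≤ 1 := fun n hn x => by
    obtain h | h : P n x = -1 ∨ P n x = 1 := hP n hn x <;> simp [h]
  obtain ⟨a, a', b, b', ha, ha', hb, hb', hsinglet⟩ :=
    exists_singlet_chsh_eq_two_mul_sqrt_two (u := EuclideanSpace.single (0 : Fin 3) (1 : ℝ))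
      (v := EuclideanSpace.single 1 1) (by simp) (by simp)
      (by simp [EuclideanSpace.inner_single_left])
  have hchsh := integral_chsh_le_two (μ := μ)
    (hMeas a ha).1.aestronglyMeasurable (hMeas a' ha').1.aestronglyMeasurable
    (hMeas b hb).2.aestronglyMeasurable (hMeas b' hb').2.aestronglyMeasurable
    (fun _ => hP1 a ha _) (fun _ => hP1 a' ha' _) (fun _ => hP1 b hb _)
    (fun _ => hP1 b' hb' _)
  rw [hE a b ha hb, hE a b' ha hb', hE a' b ha' hb, hE a' b' ha' hb'] at hchsh
  linarith [Real.one_lt_sqrt_two]
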